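/- Let β be an alternate base of length p (so x_β<+∞). Then D'_β = ⋃_{h=0}^{p−1} Y'_{β,h}·D'_{β^(h)} (concatenation of each word of Y'_{β,h} with each element of D'_{β^(h)}). -/

import Mathlib

/-!
A point `x ∈ (x_β - 1, x_β]` has an expansion different from `ℓ* = ℓ*_β(x_β - 1)`: the lazy
remainders of two points with the same first `N` digits differ by `β_0 ⋯ β_{N-1}` times their
distance, yet lie in an interval of length one, so expansions of points at a fixed distance
separate after boundedly many digits. Since the lazy expansion is monotone and `ℓ*` is the limit
of expansions of points below `x`, the first differing digit of `ℓ_β(x)` is the larger one, and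
the tail after position `n` is the lazy expansion of a remainder in base `β^(n) = β^(n mod p)`.

Conversely, for a word `ℓ*_0 ⋯ ℓ*_{n-2} s · ℓ_{β^(n)}(z)` solve backwards for remainders `V_k`
with `V_n = z`. Digits at most `⌈β_k⌉ - 1` keep `V_k ≤ x_{β^(k)}`, via
`β_k x_{β^(k)} = ⌈β_k⌉ - 1 + x_{β^(k+1)}` (periodicity makes every `x_{β^(k)}` finite), and
comparison with the remainders of a point near `x_β - 1` whose expansion begins with
`ℓ*_0 ⋯ ℓ*_{n-1}` gives `V_k > x_{β^(k)} - 1`. Remainders in these intervals force the lazy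
algorithm to output the given digits.
-/

open Filter Topology

/-- A Cantor real base: a sequence of reals `> 1` whose infinite product diverges to `+∞`. -/
structure IsCantorBase (β : ℕ → ℝ) : Prop where
  one_lt : ∀ n, 1 < β n
  prod_tendsto : Tendsto (fun N => ∏ i ∈ Finset.range N, β i) atTop atTop

/-- The product `β_0 ⋯ β_n`. -/
noncomputable def prodUpTo (β : ℕ → ℝ) (n : ℕ) : ℝ := ∏ i ∈ Finset.range (n + 1), β i

/-- The shifted base `β^(n) = (β_n, β_{n+1}, …)`. -/
def shiftBase (β : ℕ → ℝ) (n : ℕ) : ℕ → ℝ := fun m => β (n + m)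

/-- `x_β = Σ_{n} (⌈β_n⌉ - 1)/(β_0 ⋯ β_n)`. -/
noncomputable def xB (β : ℕ → ℝ) : ℝ := ∑' n, ((⌈β n⌉ : ℝ) - 1) / prodUpTo β n

/-- The condition `x_β < +∞`, i.e. the series defining `x_β` converges. -/
def XBSummable (β : ℕ → ℝ) : Prop :=
  Summable (fun n => ((⌈β n⌉ : ℝ) - 1) / prodUpTo β n)

/-- `val_β(a) = Σ_n a_n/(β_0 ⋯ β_n)`. -/
noncomputable def valB (β : ℕ → ℝ) (a : ℕ → ℤ) : ℝ := ∑' n, (a n : ℝ) / prodUpTo β n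

/-- The digit condition `a_n ∈ [[0, ⌈β_n⌉ - 1]]` for all `n`. -/
def validWord (β : ℕ → ℝ) (a : ℕ → ℤ) : Prop := ∀ n, 0 ≤ a n ∧ a n ≤ ⌈β n⌉ - 1

/-- The flip map `θ_β`. -/
noncomputable def theta (β : ℕ → ℝ) (a : ℕ → ℤ) : ℕ → ℤ := fun n => ⌈β n⌉ - 1 - a n

/-- The greedy remainders `r_{β,n}(x)`. -/
noncomputable def greedyR (β : ℕ → ℝ) (x : ℝ) : ℕ → ℝ
  | 0 => β 0 * x - (⌊β 0 * x⌋ : ℝ)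
  | n + 1 => β (n + 1) * greedyR β x n - (⌊β (n + 1) * greedyR β x n⌋ : ℝ)

/-- The greedy digits `ε_{β,n}(x)`; `greedyDigit β x` is the greedy β-expansion `d_β(x)`. -/
noncomputable def greedyDigit (β : ℕ → ℝ) (x : ℝ) : ℕ → ℤ
  | 0 => ⌊β 0 * x⌋
  | n + 1 => ⌊β (n + 1) * greedyR β x n⌋

/-- The lazy remainders `s_{β,n}(x)`. -/
noncomputable def lazyS (β : ℕ → ℝ) (x : ℝ) : ℕ → ℝ
  | 0 => β 0 * x - (⌈β 0 * x - xB (shiftBase β 1)⌉ : ℝ)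
  | n + 1 => β (n + 1) * lazyS β x n -
      (⌈β (n + 1) * lazyS β x n - xB (shiftBase β (n + 2))⌉ : ℝ)

/-- The lazy digits `ξ_{β,n}(x)`; `lazyDigit β x` is the lazy β-expansion `ℓ_β(x)`. -/
noncomputable def lazyDigit (β : ℕ → ℝ) (x : ℝ) : ℕ → ℤ
  | 0 => ⌈β 0 * x - xB (shiftBase β 1)⌉
  | n + 1 => ⌈β (n + 1) * lazyS β x n - xB (shiftBase β (n + 2))⌉

/-- Strict lexicographic order on infinite words. -/
def lexLt (a b : ℕ → ℤ) : Prop := ∃ k, (∀ i < k, a i = b i) ∧ a k < b k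

/-- Lexicographic order on infinite words. -/
def lexLe (a b : ℕ → ℤ) : Prop := lexLt a b ∨ a = b

/-- `D_β`, the set of greedy β-expansions of points of `[0,1)`. -/
def greedySet (β : ℕ → ℝ) : Set (ℕ → ℤ) :=
  {a | ∃ x ∈ Set.Ico (0 : ℝ) 1, a = greedyDigit β x}

/-- `D'_β`, the set of lazy β-expansions of points of `(x_β - 1, x_β]`. -/
def lazySet (β : ℕ → ℝ) : Set (ℕ → ℤ) :=
  {a | ∃ x ∈ Set.Ioc (xB β - 1) (xB β), a = lazyDigit β x}

/-- `Δ'_β = ⋃_n D'_{β^(n)}`. -/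
def deltaSet (β : ℕ → ℝ) : Set (ℕ → ℤ) := ⋃ n, lazySet (shiftBase β n)


abbrev lazyInterval (β : ℕ → ℝ) : Set ℝ := Set.Ioc (xB β - 1) (xB β)

/-- `lazyOrbit β x k` is the remainder `s_{β,k-1}(x)` from which the digit `ξ_{β,k}(x)` is read,
with the convention `s_{β,-1}(x) = x`. -/
noncomputable def lazyOrbit (β : ℕ → ℝ) (x : ℝ) : ℕ → ℝ
  | 0 => x
  | k + 1 => lazyS β x k

section LazyOrbit

variable {β : ℕ → ℝ}

lemma shiftBase_zero (β : ℕ → ℝ) : shiftBase β 0 = β := by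
  funext i; simp [shiftBase]

lemma shiftBase_shiftBase (β : ℕ → ℝ) (m k : ℕ) :
    shiftBase (shiftBase β m) k = shiftBase β (m + k) := by
  funext i; simp [shiftBase, add_assoc]

lemma sub_ceil_sub_mem_Ioc (t c : ℝ) : t - ⌈t - c⌉ ∈ Set.Ioc (c - 1) c :=
  ⟨by linarith [Int.ceil_lt_add_one (t - c)], by linarith [Int.le_ceil (t - c)]⟩

lemma ceil_sub_eq_of_sub_mem_Ioc {t c : ℝ} {d : ℤ} (h : t - d ∈ Set.Ioc (c - 1) c) :
    ⌈t - c⌉ = d :=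
  Int.ceil_eq_iff.2 ⟨by linarith [h.1], by linarith [h.2]⟩

lemma lazyDigit_eq_ceil (x : ℝ) (k : ℕ) :
    lazyDigit β x k = ⌈β k * lazyOrbit β x k - xB (shiftBase β (k + 1))⌉ := by
  cases k <;> rfl

lemma lazyOrbit_succ (x : ℝ) (k : ℕ) :
    lazyOrbit β x (k + 1) = β k * lazyOrbit β x k - lazyDigit β x k := by
  cases k <;> rfl

lemma lazyOrbit_succ_mem (x : ℝ) (k : ℕ) :
    lazyOrbit β x (k + 1) ∈ lazyInterval (shiftBase β (k + 1)) := by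
  rw [lazyOrbit_succ, lazyDigit_eq_ceil]
  exact sub_ceil_sub_mem_Ioc _ _

lemma lazyOrbit_mem {x : ℝ} (hx : x ∈ lazyInterval β) (k : ℕ) :
    lazyOrbit β x k ∈ lazyInterval (shiftBase β k) := by
  cases k with
  | zero => rwa [shiftBase_zero]
  | succ k => exact lazyOrbit_succ_mem x k

lemma lazyOrbit_add (x : ℝ) (n m : ℕ) :
    lazyOrbit β x (n + m) = lazyOrbit (shiftBase β n) (lazyOrbit β x n) m := by
  induction m with
  | zero => rfl
  | succ m ih =>
    rw [← add_assoc, lazyOrbit_succ, lazyOrbit_succ, lazyDigit_eq_ceil, lazyDigit_eq_ceil, ih,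
      shiftBase_shiftBase, add_assoc]
    rfl

lemma lazyDigit_add (x : ℝ) (n m : ℕ) :
    lazyDigit β x (n + m) = lazyDigit (shiftBase β n) (lazyOrbit β x n) m := by
  rw [lazyDigit_eq_ceil, lazyDigit_eq_ceil, lazyOrbit_add, shiftBase_shiftBase, add_assoc]
  rfl

lemma lazyDigit_tail_mem_lazySet {x : ℝ} (hx : x ∈ lazyInterval β) (n : ℕ) :
    (fun m => lazyDigit β x (n + m)) ∈ lazySet (shiftBase β n) :=
  ⟨lazyOrbit β x n, lazyOrbit_mem hx n, funext (lazyDigit_add x n)⟩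

lemma lazyOrbit_sub {x y : ℝ} {N : ℕ} (h : ∀ k < N, lazyDigit β x k = lazyDigit β y k) :
    lazyOrbit β x N - lazyOrbit β y N = (∏ i ∈ Finset.range N, β i) * (x - y) := by
  induction N with
  | zero => simp [lazyOrbit]
  | succ N ih =>
    rw [lazyOrbit_succ, lazyOrbit_succ, h N N.lt_succ_self, Finset.prod_range_succ]
    linear_combination β N * ih fun k hk => h k (hk.trans N.lt_succ_self)

lemma lazyDigit_le_of_le (hβ : ∀ n, 0 < β n) {x y : ℝ} (hyx : y ≤ x) {k : ℕ}
    (h : ∀ i < k, lazyDigit β y i = lazyDigit β x i) : lazyDigit β y k ≤ lazyDigit β x k := by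
  have horbit : lazyOrbit β y k ≤ lazyOrbit β x k := by
    have := lazyOrbit_sub fun i hi => (h i hi).symm
    nlinarith [Finset.prod_nonneg fun i (_ : i ∈ Finset.range k) => (hβ i).le]
  rw [lazyDigit_eq_ceil, lazyDigit_eq_ceil]
  gcongr
  exact (hβ k).le

lemma lazyDigit_eq_of_lazyOrbit_eq {x v : ℝ} {k : ℕ} {d : ℤ} (hv : lazyOrbit β x k = v)
    (hmem : β k * v - d ∈ lazyInterval (shiftBase β (k + 1))) : lazyDigit β x k = d := by
  rw [lazyDigit_eq_ceil, hv]
  exact ceil_sub_eq_of_sub_mem_Ioc hmem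

lemma lazyOrbit_eq_of_orbit {V : ℕ → ℝ} {a : ℕ → ℤ} {n : ℕ}
    (hV : ∀ k < n, V (k + 1) = β k * V k - a k)
    (hmem : ∀ k < n, V (k + 1) ∈ lazyInterval (shiftBase β (k + 1))) :
    ∀ k ≤ n, lazyOrbit β (V 0) k = V k := by
  intro k hk
  induction k with
  | zero => rfl
  | succ k ih =>
    have hv := ih (by omega)
    rw [lazyOrbit_succ, hv,
      lazyDigit_eq_of_lazyOrbit_eq hv (hV k hk ▸ hmem k hk), hV k hk]

end LazyOrbit

section XB

variable {β : ℕ → ℝ}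

lemma prodUpTo_succ (β : ℕ → ℝ) (n : ℕ) :
    prodUpTo β (n + 1) = β 0 * prodUpTo (shiftBase β 1) n := by
  rw [prodUpTo, prodUpTo, Finset.prod_range_succ', mul_comm]
  simp only [shiftBase, add_comm 1]

lemma mul_xB (hs : XBSummable β) (h0 : β 0 ≠ 0) :
    β 0 * xB β = (⌈β 0⌉ - 1) + xB (shiftBase β 1) := by
  have hterm : ∀ n, ((⌈β (n + 1)⌉ : ℝ) - 1) / prodUpTo β (n + 1) =
      (β 0)⁻¹ * (((⌈shiftBase β 1 n⌉ : ℝ) - 1) / prodUpTo (shiftBase β 1) n) := by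
    intro n
    rw [prodUpTo_succ, shiftBase, add_comm 1, div_mul_eq_div_div_swap, inv_mul_eq_div]
  rw [xB, hs.tsum_eq_zero_add, tsum_congr hterm, tsum_mul_left, xB]
  simp only [prodUpTo, zero_add, Finset.range_one, Finset.prod_singleton]
  field_simp

lemma mul_xB_shiftBase {k : ℕ} (hs : XBSummable (shiftBase β k)) (hk : β k ≠ 0) :
    β k * xB (shiftBase β k) = (⌈β k⌉ - 1) + xB (shiftBase β (k + 1)) := by
  simpa [shiftBase_shiftBase, shiftBase] using mul_xB hs (by simpa [shiftBase] using hk)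

lemma xbSummable_of_bounds {b M : ℝ} (hb : 1 < b) (hlow : ∀ n, b ≤ β n)
    (hup : ∀ n, β n ≤ M) : XBSummable β := by
  have hb0 : 0 < b := zero_lt_one.trans hb
  have hprod : ∀ n, b ^ (n + 1) ≤ prodUpTo β n := fun n => by
    simpa [prodUpTo] using Finset.prod_le_prod (s := Finset.range (n + 1))
      (fun _ _ => hb0.le) fun i _ => hlow i
  have hnum : ∀ n, (0 : ℝ) ≤ ⌈β n⌉ - 1 := fun n => by
    linarith [Int.le_ceil (β n), hlow n]
  have hgeom : Summable fun n => M / b * b⁻¹ ^ n :=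
    (summable_geometric_of_lt_one (by positivity) (inv_lt_one_of_one_lt₀ hb)).mul_left _
  refine hgeom.of_nonneg_of_le
    (fun n => div_nonneg (hnum n) ((pow_pos hb0 _).le.trans (hprod n))) fun n => ?_
  calc ((⌈β n⌉ : ℝ) - 1) / prodUpTo β n ≤ M / b ^ (n + 1) :=
        div_le_div₀ (by linarith [hnum n, Int.ceil_lt_add_one (β n), hup n])
          (by linarith [Int.ceil_lt_add_one (β n), hup n]) (by positivity) (hprod n)
    _ = M / b * b⁻¹ ^ n := by rw [pow_succ, inv_pow]; field_simp

end XB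

lemma Function.Periodic.exists_forall_le_nat {f : ℕ → ℝ} {p : ℕ} (hf : Function.Periodic f p)
    (hp : 0 < p) : ∃ i, ∀ n, f i ≤ f n := by
  obtain ⟨i, -, hi⟩ := (Finset.range p).exists_min_image f ⟨0, Finset.mem_range.2 hp⟩
  exact ⟨i, fun n => hf.map_mod_nat n ▸ hi _ (Finset.mem_range.2 (n.mod_lt hp))⟩

lemma Function.Periodic.exists_forall_ge_nat {f : ℕ → ℝ} {p : ℕ} (hf : Function.Periodic f p)
    (hp : 0 < p) : ∃ i, ∀ n, f n ≤ f i := by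
  obtain ⟨i, -, hi⟩ := (Finset.range p).exists_max_image f ⟨0, Finset.mem_range.2 hp⟩
  exact ⟨i, fun n => hf.map_mod_nat n ▸ hi _ (Finset.mem_range.2 (n.mod_lt hp))⟩

lemma xbSummable_shiftBase_of_periodic {β : ℕ → ℝ} {p : ℕ} (hβ : ∀ n, 1 < β n)
    (hper : Function.Periodic β p) (hp : 0 < p) (n : ℕ) : XBSummable (shiftBase β n) := by
  obtain ⟨i, hi⟩ := hper.exists_forall_le_nat hp
  obtain ⟨j, hj⟩ := hper.exists_forall_ge_nat hp
  exact xbSummable_of_bounds (hβ i) (fun k => hi (n + k)) (fun k => hj (n + k))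

lemma shiftBase_mod_of_periodic {β : ℕ → ℝ} {p : ℕ} (hper : Function.Periodic β p) (n : ℕ) :
    shiftBase β (n % p) = shiftBase β n := by
  funext m
  rw [shiftBase, shiftBase, ← hper.map_mod_nat (n % p + m), ← hper.map_mod_nat (n + m),
    Nat.mod_add_mod]

section Comparison

variable {β : ℕ → ℝ}

lemma lazyDigit_le_ceil_sub_one {x : ℝ} {k : ℕ} (hs : XBSummable (shiftBase β k)) (hk : 0 < β k)
    (hx : lazyOrbit β x k ≤ xB (shiftBase β k)) : lazyDigit β x k ≤ ⌈β k⌉ - 1 := by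
  rw [lazyDigit_eq_ceil, Int.ceil_le]
  push_cast
  nlinarith [mul_xB_shiftBase hs hk.ne']

lemma exists_lazyDigit_ne (hβ : IsCantorBase β) {x c : ℝ} (hx : x ∈ lazyInterval β)
    (hcx : c < x) :
    ∃ N, ∀ y ∈ lazyInterval β, y ≤ c → ∃ k < N, lazyDigit β y k ≠ lazyDigit β x k := by
  obtain ⟨N, hN⟩ := (hβ.prod_tendsto.eventually_ge_atTop (1 / (x - c))).exists
  rw [div_le_iff₀ (sub_pos.2 hcx)] at hN
  refine ⟨N, fun y hy hyc => ?_⟩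
  by_contra! hagree
  have hsub := lazyOrbit_sub fun k hk => (hagree k hk).symm
  have hprod : 0 ≤ ∏ i ∈ Finset.range N, β i :=
    Finset.prod_nonneg fun i _ => (zero_lt_one.trans (hβ.one_lt i)).le
  linarith [(lazyOrbit_mem hx N).2, (lazyOrbit_mem hy N).1, mul_le_mul_of_nonneg_left
    (sub_le_sub_left hyc x) hprod]

lemma eventually_lazyDigit_eq {ℓ : ℕ → ℤ} {l : Filter ℝ} (hl : Tendsto (lazyDigit β) l (𝓝 ℓ))
    (K : ℕ) : ∀ᶠ y in l, ∀ i < K, lazyDigit β y i = ℓ i := by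
  refine (eventually_all_finite (Set.finite_Iio K)).2 fun i _ => ?_
  exact tendsto_pure.1 (nhds_discrete ℤ ▸ tendsto_pi_nhds.1 hl i)

lemma exists_lazyDigit_eq_of_tendsto {ℓ : ℕ → ℤ}
    (hl : Tendsto (lazyDigit β) (𝓝[>] (xB β - 1)) (𝓝 ℓ)) (K : ℕ) {c : ℝ} (hc : xB β - 1 < c) :
    ∃ y ∈ lazyInterval β, y < c ∧ ∀ i < K, lazyDigit β y i = ℓ i := by
  have hdom : ∀ᶠ y in 𝓝[>] (xB β - 1), y ∈ lazyInterval β :=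
    Ioc_mem_nhdsGT (sub_one_lt _)
  have hlt : ∀ᶠ y in 𝓝[>] (xB β - 1), y < c :=
    mem_nhdsWithin_of_mem_nhds (Iio_mem_nhds hc)
  obtain ⟨y, hy, hyc, hyℓ⟩ := (hdom.and (hlt.and (eventually_lazyDigit_eq hl K))).exists
  exact ⟨y, hy, hyc, hyℓ⟩

lemma exists_orbit_eq {α : Type*} (T : ℕ → α → α) (hT : ∀ k, Function.Surjective (T k))
    (n : ℕ) (z : α) : ∃ V : ℕ → α, V n = z ∧ ∀ k < n, V (k + 1) = T k (V k) := by
  induction n generalizing z with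
  | zero => exact ⟨fun _ => z, rfl, fun k hk => absurd hk k.not_lt_zero⟩
  | succ n ih =>
    obtain ⟨w, hw⟩ := hT n z
    obtain ⟨V, hVn, hV⟩ := ih w
    refine ⟨Function.update V (n + 1) z, by simp, fun k hk => ?_⟩
    rcases Nat.lt_succ_iff_lt_or_eq.1 hk with hk | rfl
    · rw [Function.update_of_ne (by omega), Function.update_of_ne (by omega), hV k hk]
    · simp [Function.update, hVn, hw]

variable {V W : ℕ → ℝ} {a b : ℕ → ℤ} {n : ℕ}

lemma orbit_le_of_digits_le (hβ : ∀ k, 0 < β k) (hV : ∀ k < n, V (k + 1) = β k * V k - a k)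
    (hW : ∀ k < n, W (k + 1) = β k * W k - b k) (hab : ∀ k < n, a k ≤ b k) (hn : V n ≤ W n) :
    ∀ k ≤ n, V k ≤ W k := by
  intro k hk
  induction hk using Nat.decreasingInduction with
  | self => exact hn
  | of_succ k hk ih =>
    have : (a k : ℝ) ≤ b k := by exact_mod_cast hab k hk
    exact le_of_mul_le_mul_left (by linarith [hV k hk, hW k hk]) (hβ k)

lemma orbit_lt_of_digits_le (hβ : ∀ k, 0 < β k) (hV : ∀ k < n, V (k + 1) = β k * V k - a k)
    (hW : ∀ k < n, W (k + 1) = β k * W k - b k) (hab : ∀ k < n, a k ≤ b k) (hn : V n < W n) :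
    ∀ k ≤ n, V k < W k := by
  intro k hk
  induction hk using Nat.decreasingInduction with
  | self => exact hn
  | of_succ k hk ih =>
    have : (a k : ℝ) ≤ b k := by exact_mod_cast hab k hk
    exact lt_of_mul_lt_mul_left (by linarith [hV k hk, hW k hk]) (hβ k).le

end Comparison

section QuasiLazy

variable {β : ℕ → ℝ} {ℓ : ℕ → ℤ}

lemma exists_lazyDigit_gt_of_tendsto (hβ : IsCantorBase β)
    (hl : Tendsto (lazyDigit β) (𝓝[>] (xB β - 1)) (𝓝 ℓ)) {x : ℝ} (hx : x ∈ lazyInterval β) :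
    ∃ K, (∀ i < K, lazyDigit β x i = ℓ i) ∧ ℓ K < lazyDigit β x K := by
  classical
  have hne : ∃ k, lazyDigit β x k ≠ ℓ k := by
    obtain ⟨c, hc, hcx⟩ := exists_between hx.1
    obtain ⟨N, hN⟩ := exists_lazyDigit_ne hβ hx hcx
    obtain ⟨y, hy, hyc, hyℓ⟩ := exists_lazyDigit_eq_of_tendsto hl N hc
    obtain ⟨k, hk, hyx⟩ := hN y hy hyc.le
    exact ⟨k, fun h => hyx (by rw [hyℓ k hk, h])⟩
  have hmin : ∀ i < Nat.find hne, lazyDigit β x i = ℓ i := fun i hi =>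
    not_not.1 (Nat.find_min hne hi)
  refine ⟨Nat.find hne, hmin, lt_of_le_of_ne ?_ (Nat.find_spec hne).symm⟩
  obtain ⟨y, -, hyx, hyℓ⟩ := exists_lazyDigit_eq_of_tendsto hl (Nat.find hne + 1) hx.1
  rw [← hyℓ _ (Nat.lt_succ_self _)]
  exact lazyDigit_le_of_le (fun n => zero_lt_one.trans (hβ.one_lt n)) hyx.le fun i hi => by
    rw [hyℓ i (by omega), hmin i hi]

lemma mem_lazySet_of_prefix (hβ : IsCantorBase β) (hs : ∀ n, XBSummable (shiftBase β n))
    (hl : Tendsto (lazyDigit β) (𝓝[>] (xB β - 1)) (𝓝 ℓ)) {a : ℕ → ℤ} {K : ℕ}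
    (hpre : ∀ i < K, a i = ℓ i) (hlt : ℓ K < a K) (hle : a K ≤ ⌈β K⌉ - 1)
    (htail : (fun m => a (K + 1 + m)) ∈ lazySet (shiftBase β (K + 1))) : a ∈ lazySet β := by
  have hpos : ∀ n, 0 < β n := fun n => zero_lt_one.trans (hβ.one_lt n)
  obtain ⟨z, hz, hza⟩ := htail
  obtain ⟨V, hVz, hV⟩ := exists_orbit_eq (fun k v => β k * v - a k)
    (fun k w => ⟨(w + a k) / β k, by field_simp [(hpos k).ne']; ring⟩) (K + 1) z
  obtain ⟨y, hy, -, hyℓ⟩ := exists_lazyDigit_eq_of_tendsto hl (K + 1) (sub_one_lt (xB β))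
  have hdigits : ∀ k < K + 1, a k ≤ ⌈β k⌉ - 1 := fun k hk => by
    rcases Nat.lt_succ_iff_lt_or_eq.1 hk with hk | rfl
    · rw [hpre k hk, ← hyℓ k (by omega)]
      exact lazyDigit_le_ceil_sub_one (hs k) (hpos k) (lazyOrbit_mem hy k).2
    · exact hle
  have hupper := orbit_le_of_digits_le (W := fun k => xB (shiftBase β k)) hpos hV
    (fun k _ => by push_cast; linarith [mul_xB_shiftBase (hs k) (hpos k).ne']) hdigits
    (hVz ▸ hz.2)
  -- `V` and the lazy orbit of `y` share their digits before `K`, where `V` has the larger one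
  have hK : lazyOrbit β y K < V K := by
    have hyK := lazyOrbit_succ (β := β) y K
    rw [hyℓ K K.lt_succ_self] at hyK
    have haK : (ℓ K : ℝ) + 1 ≤ a K := by exact_mod_cast hlt
    refine lt_of_mul_lt_mul_left ?_ (hpos K).le
    linarith [hV K K.lt_succ_self, (lazyOrbit_mem hy (K + 1)).2, hz.1]
  have hlower := orbit_lt_of_digits_le hpos (fun k _ => lazyOrbit_succ y k)
    (fun k hk => hV k (by omega)) (fun k hk => by rw [hyℓ k (by omega), hpre k hk]) hK
  have hmem : ∀ k ≤ K + 1, V k ∈ lazyInterval (shiftBase β k) := fun k hk => by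
    refine ⟨?_, hupper k hk⟩
    rcases Nat.lt_or_eq_of_le hk with hk | rfl
    · linarith [(lazyOrbit_mem hy k).1, hlower k (Nat.lt_succ_iff.1 hk)]
    · exact hVz ▸ hz.1
  have horbit := lazyOrbit_eq_of_orbit (β := β) hV fun k hk => hmem (k + 1) hk
  refine ⟨V 0, by simpa [shiftBase_zero] using hmem 0 (Nat.zero_le _), funext fun i => ?_⟩
  rcases lt_or_ge i (K + 1) with hi | hi
  · exact (lazyDigit_eq_of_lazyOrbit_eq (horbit i hi.le) (hV i hi ▸ hmem (i + 1) hi)).symm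
  · obtain ⟨m, rfl⟩ := Nat.exists_eq_add_of_le hi
    rw [lazyDigit_add, horbit _ le_rfl, hVz, ← hza]

end QuasiLazy

/-- for an alternate base of length `p`,
`D'_β = ⋃_{h=0}^{p−1} Y'_{β,h}·D'_{β^(h)}`. -/
theorem lazySet_decomposition_alternate (β : ℕ → ℝ) (p : ℕ) (hp : 0 < p)
    (hβ : IsCantorBase β) (hper : ∀ n, β (n + p) = β n)
    (ℓstar : ℕ → ℤ)
    (hl : Tendsto (lazyDigit β) (nhdsWithin (xB β - 1) (Set.Ioi (xB β - 1))) (nhds ℓstar)) :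
    lazySet β = {a | ∃ h < p, ∃ n : ℕ, 1 ≤ n ∧ n % p = h ∧
      (∀ i < n - 1, a i = ℓstar i) ∧
      ℓstar (n - 1) < a (n - 1) ∧ a (n - 1) ≤ ⌈β (n - 1)⌉ - 1 ∧
      (fun m => a (n + m)) ∈ lazySet (shiftBase β h)} := by
  have hs := xbSummable_shiftBase_of_periodic hβ.one_lt hper hp
  ext a
  constructor
  · rintro ⟨x, hx, rfl⟩
    obtain ⟨K, hpre, hlt⟩ := exists_lazyDigit_gt_of_tendsto hβ hl hx
    refine ⟨(K + 1) % p, Nat.mod_lt _ hp, K + 1, K.succ_pos, rfl, hpre, hlt,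
      lazyDigit_le_ceil_sub_one (hs K) (zero_lt_one.trans (hβ.one_lt K)) (lazyOrbit_mem hx K).2,
      ?_⟩
    rw [shiftBase_mod_of_periodic hper]
    exact lazyDigit_tail_mem_lazySet hx (K + 1)
  · rintro ⟨_, -, n, hn, rfl, hpre, hlt, hle, htail⟩
    obtain ⟨K, rfl⟩ := Nat.exists_eq_add_of_le' hn
    rw [shiftBase_mod_of_periodic hper] at htail
    exact mem_lazySet_of_prefix hβ hs hl hpre hlt hle htail
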